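/- For the case $k = 2$: if $0 < p_1, p_2 < \infty$, $\alpha_1, \alpha_2 > -1$, $\lambda = 1/p_1 + 1/p_2$ and $\gamma = \frac{1}{\lambda}(\alpha_1/p_1 + \alpha_2/p_2)$, then for holomorphic $f \in A^{p_1}_{\alpha_1}$ and $g \in A^{p_2}_{\alpha_2}$, the product $fg$ lies in $A^{1/\lambda}_\gamma$ with $\|fg\|_{1/\lambda,\gamma} \lesssim \|f\|_{p_1,\alpha_1} \|g\|_{p_2,\alpha_2}$. -/

import Mathlib

/-! Multiplying `f` by `(1 - ‖z‖²)^(α/p)` identifies `A^p_α` isometrically with the unweighted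
space `L^p(B)`. With `1/q = 1/p₁ + 1/p₂` and `γ/q = α₁/p₁ + α₂/p₂`, the image of `f g` in `L^q(B)`
is the product of the images of `f` and `g`, so the generalized Hölder inequality
`‖F G‖_q ≤ ‖F‖_{p₁} ‖G‖_{p₂}` bounds `‖f g‖_{q,γ}` by `‖f‖_{p₁,α₁} ‖g‖_{p₂,α₂}`. -/

open MeasureTheory

noncomputable section

abbrev Cn (n : ℕ) := EuclideanSpace ℂ (Fin n)


noncomputable instance (n : ℕ) : MeasurableSpace (Cn n) := borel _
instance (n : ℕ) : BorelSpace (Cn n) := ⟨rfl⟩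
noncomputable instance (n : ℕ) : MeasureSpace (Cn n) := ⟨MeasureTheory.Measure.addHaar⟩

def B (n : ℕ) : Set (Cn n) := Metric.ball 0 1

def bdot {n : ℕ} (z w : Cn n) : ℂ := ∑ j, z j * (starRingEnd ℂ) (w j)

def vol (n : ℕ) (α : ℝ) : Measure (Cn n) :=
  (volume.restrict (B n)).withDensity fun z => ENNReal.ofReal ((1 - ‖z‖ ^ 2) ^ α)

def Hol {n : ℕ} (f : Cn n → ℂ) : Prop := DifferentiableOn ℂ f (B n)

def bNorm (n : ℕ) (p α : ℝ) (f : Cn n → ℂ) : ℝ :=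
  (∫ z, ‖f z‖ ^ p ∂(vol n α)) ^ (1 / p)

def InBergman (n : ℕ) (p α : ℝ) (f : Cn n → ℂ) : Prop :=
  Hol f ∧ Integrable (fun z => ‖f z‖ ^ p) (vol n α)

def rderiv {n : ℕ} (f : Cn n → ℂ) (z : Cn n) : ℂ := fderiv ℂ f z z

def mob {n : ℕ} (a z : Cn n) : ℝ :=
  (1 - ‖a‖ ^ 2) * (1 - ‖z‖ ^ 2) / ‖(1 : ℂ) - bdot z a‖ ^ 2

def rho {n : ℕ} (z w : Cn n) : ℝ := Real.sqrt (1 - mob z w)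

def bergDist {n : ℕ} (z w : Cn n) : ℝ :=
  (1 / 2) * Real.log ((1 + rho z w) / (1 - rho z w))

def bergBall {n : ℕ} (a : Cn n) (r : ℝ) : Set (Cn n) := {w ∈ B n | bergDist a w < r}

def IsCarleson (n : ℕ) (lam γ : ℝ) (μ : Measure (Cn n)) : Prop :=
  ∀ p q : ℝ, 0 < p → 0 < q → q / p = lam →
    ∃ C > 0, ∀ f : Cn n → ℂ, InBergman n p γ f →
      ∫ z, ‖f z‖ ^ q ∂μ ≤ C * bNorm n p γ f ^ q

def blochSet (n : ℕ) (α : ℝ) (f : Cn n → ℂ) : Set ℝ :=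
  {x | ∃ z ∈ B n, x = ‖rderiv f z‖ * (1 - ‖z‖ ^ 2) ^ α}

def blochNorm (n : ℕ) (α : ℝ) (f : Cn n → ℂ) : ℝ := sSup (blochSet n α f)

def InBloch (n : ℕ) (α : ℝ) (f : Cn n → ℂ) : Prop :=
  Hol f ∧ BddAbove (blochSet n α f)

def Fint (n : ℕ) (p q s : ℝ) (f : Cn n → ℂ) (a : Cn n) : ℝ :=
  ∫ z in B n, ‖rderiv f z‖ ^ p * (1 - ‖z‖ ^ 2) ^ q * mob a z ^ s

def FSet (n : ℕ) (p q s : ℝ) (f : Cn n → ℂ) : Set ℝ :=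
  {x | ∃ a ∈ B n, x = Fint n p q s f a}

def FNorm (n : ℕ) (p q s : ℝ) (f : Cn n → ℂ) : ℝ := sSup (FSet n p q s f) ^ (1 / p)

def InF (n : ℕ) (p q s : ℝ) (f : Cn n → ℂ) : Prop :=
  Hol f ∧ BddAbove (FSet n p q s f)

def toeplitz (n : ℕ) (β : ℝ) (μ : Measure (Cn n)) (f : Cn n → ℂ) (z : Cn n) : ℂ :=
  ∫ w, f w / ((1 : ℂ) - bdot z w) ^ ((((n : ℝ) + 1 + β : ℝ)) : ℂ) ∂μ

def carlSet (n : ℕ) (p q γ : ℝ) (μ : Measure (Cn n)) : Set ℝ :=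
  {x | ∃ f : Cn n → ℂ, InBergman n p γ f ∧ bNorm n p γ f ≤ 1 ∧ x = ∫ z, ‖f z‖ ^ q ∂μ}

lemma ENNReal.holderTriple_ofReal {p q r : ℝ} (hp : 0 < p) (hq : 0 < q)
    (hpqr : p⁻¹ + q⁻¹ = r⁻¹) :
    HolderTriple (ENNReal.ofReal p) (ENNReal.ofReal q) (ENNReal.ofReal r) where
  inv_add_inv_eq_inv := by
    have hr : 0 < r := inv_pos.1 (hpqr ▸ by positivity)
    rw [← ofReal_inv_of_pos hp, ← ofReal_inv_of_pos hq, ← ofReal_inv_of_pos hr, ← hpqr,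
      ofReal_add (by positivity) (by positivity)]

section WeightedLp

variable {X E : Type*} [MeasurableSpace X] [NormedAddCommGroup E] [NormedSpace ℝ E]
  {μ : Measure X} {w : X → ℝ} {p : ℝ}

lemma eLpNorm_withDensity_ofReal (hw : Measurable w) (hw0 : ∀ᵐ x ∂μ, 0 ≤ w x) (hp : 0 < p)
    (f : X → E) :
    eLpNorm f (.ofReal p) (μ.withDensity fun x => .ofReal (w x)) =
      eLpNorm (fun x => w x ^ p⁻¹ • f x) (.ofReal p) μ := by
  have hp' : ENNReal.ofReal p ≠ 0 := by simpa using hp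
  rw [eLpNorm_eq_lintegral_rpow_enorm_toReal hp' ENNReal.ofReal_ne_top,
    eLpNorm_eq_lintegral_rpow_enorm_toReal hp' ENNReal.ofReal_ne_top,
    lintegral_withDensity_eq_lintegral_mul_non_measurable _ hw.ennreal_ofReal
      (ae_of_all _ fun _ => ENNReal.ofReal_lt_top), ENNReal.toReal_ofReal hp.le]
  congr 1
  refine lintegral_congr_ae (hw0.mono fun x hx => ?_)
  dsimp only
  rw [Pi.mul_apply, enorm_smul, ENNReal.mul_rpow_of_nonneg _ _ hp.le,
    Real.enorm_of_nonneg (by positivity), ENNReal.ofReal_rpow_of_nonneg (by positivity) hp.le,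
    ← Real.rpow_mul hx, inv_mul_cancel₀ hp.ne', Real.rpow_one]

lemma memLp_withDensity_ofReal_iff (hw : Measurable w) (hw0 : ∀ᵐ x ∂μ, 0 ≤ w x) (hp : 0 < p)
    {f : X → E} (hf : AEStronglyMeasurable f (μ.withDensity fun x => .ofReal (w x)))
    (hwf : AEStronglyMeasurable (fun x => w x ^ p⁻¹ • f x) μ) :
    MemLp f (.ofReal p) (μ.withDensity fun x => .ofReal (w x)) ↔
      MemLp (fun x => w x ^ p⁻¹ • f x) (.ofReal p) μ := by
  simp only [MemLp, hf, hwf, true_and, eLpNorm_withDensity_ofReal hw hw0 hp]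

end WeightedLp

namespace Bergman

variable {n : ℕ} {p α : ℝ} {f : Cn n → ℂ}

lemma one_sub_norm_sq_pos {z : Cn n} (hz : z ∈ B n) : 0 < 1 - ‖z‖ ^ 2 := by
  have : ‖z‖ < 1 := by simpa [B] using hz
  nlinarith [norm_nonneg z]

lemma measurable_weight (α : ℝ) : Measurable fun z : Cn n => (1 - ‖z‖ ^ 2) ^ α := by
  fun_prop

lemma ae_weight_nonneg (α : ℝ) :
    ∀ᵐ z ∂volume.restrict (B n), 0 ≤ (1 - ‖z‖ ^ 2) ^ α :=
  (ae_restrict_mem measurableSet_ball).mono fun _ hz =>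
    Real.rpow_nonneg (one_sub_norm_sq_pos hz).le α

lemma _root_.Hol.aestronglyMeasurable (hf : Hol f) (α : ℝ) :
    AEStronglyMeasurable f (vol n α) :=
  (hf.continuousOn.aestronglyMeasurable measurableSet_ball).mono_ac
    (withDensity_absolutelyContinuous _ _)

lemma inBergman_iff_memLp (hp : 0 < p) :
    InBergman n p α f ↔ Hol f ∧ MemLp f (.ofReal p) (vol n α) := by
  refine and_congr_right fun hf => ?_
  rw [← integrable_norm_rpow_iff (hf.aestronglyMeasurable α) (by simpa using hp)
    ENNReal.ofReal_ne_top, ENNReal.toReal_ofReal hp.le]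

lemma bNorm_eq_eLpNorm (hp : 0 < p) (hf : InBergman n p α f) :
    bNorm n p α f = (eLpNorm f (.ofReal p) (vol n α)).toReal := by
  rw [((inBergman_iff_memLp hp).1 hf).2.eLpNorm_eq_integral_rpow_norm (by simpa using hp)
    ENNReal.ofReal_ne_top, ENNReal.toReal_ofReal hp.le, ENNReal.toReal_ofReal, bNorm, one_div]
  exact Real.rpow_nonneg (integral_nonneg fun _ => by positivity) _

def weighted (p α : ℝ) (f : Cn n → ℂ) (z : Cn n) : ℂ := ((1 - ‖z‖ ^ 2) ^ α) ^ p⁻¹ • f z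

lemma eLpNorm_vol (hp : 0 < p) (f : Cn n → ℂ) :
    eLpNorm f (.ofReal p) (vol n α) =
      eLpNorm (weighted p α f) (.ofReal p) (volume.restrict (B n)) :=
  eLpNorm_withDensity_ofReal (measurable_weight α) (ae_weight_nonneg α) hp f

lemma memLp_vol_iff (hp : 0 < p) (hf : Hol f) :
    MemLp f (.ofReal p) (vol n α) ↔
      MemLp (weighted p α f) (.ofReal p) (volume.restrict (B n)) :=
  memLp_withDensity_ofReal_iff (measurable_weight α) (ae_weight_nonneg α) hp
    (hf.aestronglyMeasurable α) <|
    ((measurable_weight α).pow_const p⁻¹).aestronglyMeasurable.smul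
      (hf.continuousOn.aestronglyMeasurable measurableSet_ball)

lemma weighted_mul_ae_eq {p₁ p₂ α₁ α₂ q γ : ℝ} (hγ : γ / q = α₁ / p₁ + α₂ / p₂)
    (f g : Cn n → ℂ) :
    weighted q γ (fun z => f z * g z) =ᵐ[volume.restrict (B n)]
      fun z => weighted p₁ α₁ f z * weighted p₂ α₂ g z := by
  filter_upwards [ae_restrict_mem measurableSet_ball] with z hz
  have hw := one_sub_norm_sq_pos hz
  simp only [weighted, Complex.real_smul, ← Real.rpow_mul hw.le]
  rw [mul_mul_mul_comm, ← Complex.ofReal_mul, ← Real.rpow_add hw, ← div_eq_mul_inv,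
    ← div_eq_mul_inv, ← div_eq_mul_inv, hγ]

lemma _root_.InBergman.memLp_weighted (hp : 0 < p) (hf : InBergman n p α f) :
    MemLp (weighted p α f) (.ofReal p) (volume.restrict (B n)) :=
  (memLp_vol_iff hp hf.1).1 ((inBergman_iff_memLp hp).1 hf).2

variable {p₁ p₂ α₁ α₂ q γ : ℝ} {g : Cn n → ℂ}

lemma inBergman_mul (hp₁ : 0 < p₁) (hp₂ : 0 < p₂) (hq : p₁⁻¹ + p₂⁻¹ = q⁻¹)
    (hγ : γ / q = α₁ / p₁ + α₂ / p₂) (hf : InBergman n p₁ α₁ f) (hg : InBergman n p₂ α₂ g) :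
    InBergman n q γ fun z => f z * g z := by
  have := ENNReal.holderTriple_ofReal hp₁ hp₂ hq
  have hq0 : 0 < q := inv_pos.1 (hq ▸ by positivity)
  have hfg : Hol fun z => f z * g z := hf.1.mul hg.1
  rw [inBergman_iff_memLp hq0, memLp_vol_iff hq0 hfg, memLp_congr_ae (weighted_mul_ae_eq hγ f g)]
  exact ⟨hfg, (hg.memLp_weighted hp₂).mul' (hf.memLp_weighted hp₁)⟩

lemma bNorm_mul_le (hp₁ : 0 < p₁) (hp₂ : 0 < p₂) (hq : p₁⁻¹ + p₂⁻¹ = q⁻¹)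
    (hγ : γ / q = α₁ / p₁ + α₂ / p₂) (hf : InBergman n p₁ α₁ f) (hg : InBergman n p₂ α₂ g) :
    bNorm n q γ (fun z => f z * g z) ≤ bNorm n p₁ α₁ f * bNorm n p₂ α₂ g := by
  have := ENNReal.holderTriple_ofReal hp₁ hp₂ hq
  have hq0 : 0 < q := inv_pos.1 (hq ▸ by positivity)
  have hF := hf.memLp_weighted hp₁
  have hG := hg.memLp_weighted hp₂
  rw [bNorm_eq_eLpNorm hq0 (inBergman_mul hp₁ hp₂ hq hγ hf hg), bNorm_eq_eLpNorm hp₁ hf,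
    bNorm_eq_eLpNorm hp₂ hg, eLpNorm_vol hq0, eLpNorm_vol hp₁, eLpNorm_vol hp₂,
    eLpNorm_congr_ae (weighted_mul_ae_eq hγ f g), ← ENNReal.toReal_mul]
  refine ENNReal.toReal_mono (ENNReal.mul_ne_top hF.eLpNorm_ne_top hG.eLpNorm_ne_top) ?_
  simpa using eLpNorm_le_eLpNorm_mul_eLpNorm'_of_norm hF.1 hG.1 (· * ·) 1
    (ae_of_all _ fun _ => by simp)

end Bergman

theorem stmt1_general (n : ℕ) (p₁ p₂ α₁ α₂ lam γ : ℝ)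
    (hp₁ : 0 < p₁) (hp₂ : 0 < p₂)
    (hlam : lam = 1 / p₁ + 1 / p₂)
    (hγ : γ = (1 / lam) * (α₁ / p₁ + α₂ / p₂)) :
    ∃ C > 0, ∀ f g : Cn n → ℂ, InBergman n p₁ α₁ f → InBergman n p₂ α₂ g →
      InBergman n (1 / lam) γ (fun z => f z * g z) ∧
      bNorm n (1 / lam) γ (fun z => f z * g z) ≤
        C * bNorm n p₁ α₁ f * bNorm n p₂ α₂ g := by
  have hq : p₁⁻¹ + p₂⁻¹ = (1 / lam)⁻¹ := by rw [hlam]; simp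
  have hγq : γ / (1 / lam) = α₁ / p₁ + α₂ / p₂ := by
    have : lam ≠ 0 := by rw [hlam]; positivity
    rw [hγ]; field_simp
  refine ⟨1, one_pos, fun f g hf hg => ?_⟩
  rw [one_mul]
  exact ⟨Bergman.inBergman_mul hp₁ hp₂ hq hγq hf hg, Bergman.bNorm_mul_le hp₁ hp₂ hq hγq hf hg⟩

theorem stmt1 (n : ℕ) (p₁ p₂ α₁ α₂ lam γ : ℝ)
    (hp₁ : 0 < p₁) (hp₂ : 0 < p₂) (hα₁ : -1 < α₁) (hα₂ : -1 < α₂)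
    (hlam : lam = 1 / p₁ + 1 / p₂)
    (hγ : γ = (1 / lam) * (α₁ / p₁ + α₂ / p₂)) :
    ∃ C > 0, ∀ f g : Cn n → ℂ, InBergman n p₁ α₁ f → InBergman n p₂ α₂ g →
      InBergman n (1 / lam) γ (fun z => f z * g z) ∧
      bNorm n (1 / lam) γ (fun z => f z * g z) ≤
        C * bNorm n p₁ α₁ f * bNorm n p₂ α₂ g :=
  stmt1_general n p₁ p₂ α₁ α₂ lam γ hp₁ hp₂ hlam hγ
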